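/- If u and v are strings of the same length and at least one of them has at most two runs (a run is a maximal block of one repeated character), then the Levenshtein distance between u and v equals their Hamming distance. -/

import Mathlib

/-- Hamming distance between two lists (number of mismatched positions). -/
def hammingDistL {α : Type*} [DecidableEq α] (u v : List α) : ℕ :=
  (u.zip v).countP (fun p => p.1 ≠ p.2)

/-- Number of runs of a string: length after collapsing consecutive equal characters. -/
def numRuns {α : Type*} [DecidableEq α] (u : List α) : ℕ :=
  (u.destutter (· ≠ ·)).length

/-! `levenshtein` (formerly `Mathlib/Data/List/EditDistance/Defs.lean`) is no longer in Mathlib;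
its old definition is reproduced here. -/

namespace Levenshtein

/-- Cost of the three edit operations. -/
structure Cost (α β δ : Type*) where
  /-- cost to delete -/
  delete : α → δ
  /-- cost to insert -/
  insert : β → δ
  /-- cost to substitute -/
  substitute : α → β → δ

/-- The default cost: every operation costs 1, substituting equal characters costs 0. -/
def defaultCost {α : Type*} [DecidableEq α] : Cost α α ℕ where
  delete _ := 1
  insert _ := 1
  substitute a b := if a = b then 0 else 1

/-- Step of the dynamic program. -/
def impl {α β δ : Type*} [AddZeroClass δ] [Min δ]
    (C : Cost α β δ)
    (xs : List α) (y : β) (d : {r : List δ // 0 < r.length}) : {r : List δ // 0 < r.length} :=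
  let ⟨ds, w⟩ := d
  xs.zip (ds.zip ds.tail) |>.foldr
    (init := ⟨[ds.getLast (List.ne_nil_of_length_pos w) + C.insert y], by simp⟩)
    (fun ⟨x, d₀, d₁⟩ ⟨r, w⟩ =>
      ⟨min (C.delete x + r[0]) (min (C.insert y + d₀) (C.substitute x y + d₁)) :: r, by simp⟩)

end Levenshtein

open Levenshtein

/-- Levenshtein distances of all suffixes of `xs` to `ys`. -/
def suffixLevenshtein {α β δ : Type*} [AddZeroClass δ] [Min δ] (C : Cost α β δ)
    (xs : List α) (ys : List β) : {r : List δ // 0 < r.length} :=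
  ys.foldr
    (impl C xs)
    (xs.foldr (init := ⟨[0], by simp⟩) (fun a ⟨r, w⟩ => ⟨(C.delete a + r[0]) :: r, by simp⟩))

/-- The Levenshtein distance with costs `C`. -/
def levenshtein {α β δ : Type*} [AddZeroClass δ] [Min δ] (C : Cost α β δ)
    (xs : List α) (ys : List β) : δ :=
  let ⟨r, w⟩ := suffixLevenshtein C xs ys
  r[0]

/-! For equal lengths, substitutions alone give Levenshtein ≤ Hamming, and both distances are
symmetric, so it suffices to bound the Levenshtein distance from below when `u = aᵏ bᵐ`. An edit
script for `aᵏ bᵐ ↦ v` cuts `v = v₁ v₂` into an edit of `aᵏ ↦ v₁` and one of `bᵐ ↦ v₂`, and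
editing `aᵏ` into `w` costs at least `max k |w|` minus the number of `a`s in `w`. As the number
of `a`s (or `b`s) in a prefix of `v` grows by at most one per letter, the sum of the two bounds
is smallest when the cut is at `k`, where it is exactly the Hamming distance. -/

namespace Levenshtein

section Recursion

variable {α β δ : Type*} [AddZeroClass δ] [Min δ] (C : Cost α β δ)

theorem levenshtein_eq_getElem_zero (xs : List α) (ys : List β) :
    levenshtein C xs ys = (suffixLevenshtein C xs ys).1[0]'(suffixLevenshtein C xs ys).2 := rfl

theorem suffixLevenshtein_cons_right (xs : List α) (y : β) (ys : List β) :
    suffixLevenshtein C xs (y :: ys) = impl C xs y (suffixLevenshtein C xs ys) := rfl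

theorem impl_cons (x : α) (xs : List α) (y : β) (s ds : {r : List δ // 0 < r.length})
    (h : s.1.tail = ds.1) :
    (impl C (x :: xs) y s).1 =
      min (C.delete x + (impl C xs y ds).1[0]'(impl C xs y ds).2)
        (min (C.insert y + s.1[0]'s.2) (C.substitute x y + ds.1[0]'ds.2)) ::
        (impl C xs y ds).1 := by
  obtain ⟨_ | ⟨d, l⟩, w⟩ := s
  · simp at w
  obtain ⟨_ | ⟨d₁, l'⟩, w'⟩ := ds
  · simp at w'
  obtain rfl : l = d₁ :: l' := h
  rfl

theorem tail_suffixLevenshtein_cons_left (x : α) (xs : List α) (ys : List β) :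
    (suffixLevenshtein C (x :: xs) ys).1.tail = (suffixLevenshtein C xs ys).1 := by
  induction ys with
  | nil => rfl
  | cons y ys ih => rw [suffixLevenshtein_cons_right, impl_cons C x xs y _ _ ih]; rfl

theorem length_suffixLevenshtein_nil_left (ys : List β) :
    (suffixLevenshtein C ([] : List α) ys).1.length = 1 := by
  cases ys <;> rfl

theorem levenshtein_nil_nil : levenshtein C ([] : List α) ([] : List β) = 0 := rfl

theorem levenshtein_cons_nil (x : α) (xs : List α) :
    levenshtein C (x :: xs) ([] : List β) = C.delete x + levenshtein C xs [] := rfl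

theorem levenshtein_nil_cons (y : β) (ys : List β) :
    levenshtein C ([] : List α) (y :: ys) = levenshtein C [] ys + C.insert y := by
  rw [levenshtein_eq_getElem_zero, suffixLevenshtein_cons_right]
  simp only [impl, List.zip_nil_left, List.foldr_nil, List.getElem_cons_zero,
    List.getLast_eq_getElem, length_suffixLevenshtein_nil_left]
  rfl

theorem levenshtein_cons_cons (x : α) (xs : List α) (y : β) (ys : List β) :
    levenshtein C (x :: xs) (y :: ys) =
      min (C.delete x + levenshtein C xs (y :: ys))
        (min (C.insert y + levenshtein C (x :: xs) ys)
          (C.substitute x y + levenshtein C xs ys)) := by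
  rw [levenshtein_eq_getElem_zero, suffixLevenshtein_cons_right]
  simp only [impl_cons C x xs y _ _ (tail_suffixLevenshtein_cons_left C x xs ys),
    List.getElem_cons_zero]
  rfl

end Recursion

def Cost.flip {α β δ : Type*} (C : Cost α β δ) : Cost β α δ where
  delete := C.insert
  insert := C.delete
  substitute b a := C.substitute a b

section LinearOrder

variable {α β δ : Type*} [AddZeroClass δ] [LinearOrder δ] (C : Cost α β δ)

theorem levenshtein_cons_left_le (x : α) (xs : List α) (ys : List β) :
    levenshtein C (x :: xs) ys ≤ C.delete x + levenshtein C xs ys := by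
  cases ys with
  | nil => rw [levenshtein_cons_nil]
  | cons y ys => rw [levenshtein_cons_cons]; exact min_le_left _ _

theorem levenshtein_cons_cons_le (x : α) (xs : List α) (y : β) (ys : List β) :
    levenshtein C (x :: xs) (y :: ys) ≤ C.substitute x y + levenshtein C xs ys := by
  rw [levenshtein_cons_cons]; exact (min_le_right _ _).trans (min_le_right _ _)

end LinearOrder

section AddCommMonoid

variable {α β δ : Type*} [AddCommMonoid δ] [LinearOrder δ] (C : Cost α β δ)

theorem levenshtein_flip (xs : List α) (ys : List β) :
    levenshtein C.flip ys xs = levenshtein C xs ys := by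
  induction xs generalizing ys with
  | nil =>
    induction ys with
    | nil => rfl
    | cons y ys ih => rw [levenshtein_cons_nil, levenshtein_nil_cons, ih, add_comm]; rfl
  | cons x xs ihx =>
    induction ys with
    | nil => rw [levenshtein_nil_cons, levenshtein_cons_nil, ihx, add_comm]; rfl
    | cons y ys ihy =>
      rw [levenshtein_cons_cons, levenshtein_cons_cons, ihx, ihx, ihy, min_left_comm]
      rfl

theorem levenshtein_cons_right_le (xs : List α) (y : β) (ys : List β) :
    levenshtein C xs (y :: ys) ≤ C.insert y + levenshtein C xs ys := by
  cases xs with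
  | nil => rw [levenshtein_nil_cons, add_comm]
  | cons x xs => rw [levenshtein_cons_cons]; exact (min_le_right _ _).trans (min_le_left _ _)

theorem exists_levenshtein_add_levenshtein_le_append [IsOrderedAddMonoid δ]
    (xs ys : List α) (zs : List β) : ∃ j ≤ zs.length,
      levenshtein C xs (zs.take j) + levenshtein C ys (zs.drop j) ≤
        levenshtein C (xs ++ ys) zs := by
  induction xs generalizing zs with
  | nil => exact ⟨0, Nat.zero_le _, by simp [levenshtein_nil_nil]⟩
  | cons x xs ihx =>
    induction zs with
    | nil =>
      obtain ⟨_, -, h⟩ := ihx []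
      refine ⟨0, le_rfl, ?_⟩
      simp only [List.take_nil, List.drop_nil, List.cons_append, levenshtein_cons_nil] at h ⊢
      rw [add_assoc]
      gcongr
    | cons z zs ihz =>
      rw [List.cons_append, levenshtein_cons_cons]
      set P : δ → Prop := fun d => ∃ j ≤ (z :: zs).length,
        levenshtein C (x :: xs) ((z :: zs).take j) + levenshtein C ys ((z :: zs).drop j) ≤ d
      refine min_rec' P ?_ (min_rec' P ?_ ?_)
      · obtain ⟨j, hj, h⟩ := ihx (z :: zs)
        refine ⟨j, hj, (add_le_add_left (levenshtein_cons_left_le C x xs _) _).trans ?_⟩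
        rw [add_assoc]
        exact add_le_add_right h _
      · obtain ⟨j, hj, h⟩ := ihz
        refine ⟨j + 1, Nat.succ_le_succ hj, ?_⟩
        rw [List.take_succ_cons, List.drop_succ_cons]
        refine (add_le_add_left (levenshtein_cons_right_le C _ z _) _).trans ?_
        rw [add_assoc]
        exact add_le_add_right h _
      · obtain ⟨j, hj, h⟩ := ihx zs
        refine ⟨j + 1, Nat.succ_le_succ hj, ?_⟩
        rw [List.take_succ_cons, List.drop_succ_cons]
        refine (add_le_add_left (levenshtein_cons_cons_le C x xs z _) _).trans ?_
        rw [add_assoc]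
        exact add_le_add_right h _

end AddCommMonoid

section DefaultCost

variable {α : Type*} [DecidableEq α]

@[simp] theorem defaultCost_delete (a : α) : (defaultCost : Cost α α ℕ).delete a = 1 := rfl

@[simp] theorem defaultCost_insert (a : α) : (defaultCost : Cost α α ℕ).insert a = 1 := rfl

@[simp] theorem defaultCost_substitute (a b : α) :
    (defaultCost : Cost α α ℕ).substitute a b = if a = b then 0 else 1 := rfl

theorem defaultCost_flip : (defaultCost : Cost α α ℕ).flip = defaultCost := by
  simp only [Cost.flip, defaultCost, Cost.mk.injEq, true_and]
  funext a b
  simp only [eq_comm]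

theorem levenshtein_defaultCost_comm (u v : List α) :
    levenshtein defaultCost u v = levenshtein defaultCost v u := by
  rw [← levenshtein_flip, defaultCost_flip]

theorem levenshtein_defaultCost_nil_left (v : List α) :
    levenshtein defaultCost [] v = v.length := by
  induction v with
  | nil => rfl
  | cons c v ih => rw [levenshtein_nil_cons, ih, defaultCost_insert, List.length_cons]

theorem levenshtein_defaultCost_nil_right (u : List α) :
    levenshtein defaultCost u [] = u.length := by
  rw [levenshtein_defaultCost_comm, levenshtein_defaultCost_nil_left]

theorem max_sub_count_le_levenshtein_replicate (a : α) (k : ℕ) (w : List α) :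
    max k w.length - w.count a ≤ levenshtein defaultCost (List.replicate k a) w := by
  induction k generalizing w with
  | zero => simp [levenshtein_defaultCost_nil_left]
  | succ k ihk =>
    induction w with
    | nil => simp [levenshtein_defaultCost_nil_right]
    | cons c w ihw =>
      rw [List.replicate_succ, levenshtein_cons_cons]
      have hdel := ihk (c :: w)
      have hsub := ihk w
      have hw := w.count_le_length (a := a)
      rw [List.replicate_succ] at ihw
      simp only [defaultCost_delete, defaultCost_insert, defaultCost_substitute,
        List.count_cons, beq_iff_eq, List.length_cons] at *
      rcases eq_or_ne c a with rfl | hca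
      · simp only [if_true] at *
        omega
      · simp only [hca, hca.symm, if_false] at *
        omega

end DefaultCost

end Levenshtein

section Hamming

variable {α : Type*} [DecidableEq α]

theorem hammingDistL_cons_cons (a b : α) (u v : List α) :
    hammingDistL (a :: u) (b :: v) = hammingDistL u v + if a = b then 0 else 1 := by
  simp [hammingDistL, List.countP_cons]

theorem hammingDistL_comm (u v : List α) : hammingDistL u v = hammingDistL v u := by
  rw [hammingDistL, hammingDistL, ← List.zip_swap, List.countP_map]
  congr 1
  funext p
  simp [eq_comm]

theorem hammingDistL_append_left (u₁ u₂ v : List α) :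
    hammingDistL (u₁ ++ u₂) v =
      hammingDistL u₁ (v.take u₁.length) + hammingDistL u₂ (v.drop u₁.length) := by
  induction u₁ generalizing v with
  | nil => simp [hammingDistL]
  | cons a u₁ ih => cases v with
    | nil => simp [hammingDistL]
    | cons b v =>
      simp only [List.cons_append, List.length_cons, List.take_succ_cons, List.drop_succ_cons,
        hammingDistL_cons_cons, ih]
      omega

theorem hammingDistL_replicate (a : α) {k : ℕ} {w : List α} (hw : w.length = k) :
    hammingDistL (List.replicate k a) w = k - w.count a := by
  subst hw
  induction w with
  | nil => rfl
  | cons c w ih =>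
    rw [List.length_cons, List.replicate_succ, hammingDistL_cons_cons, ih, List.count_cons]
    have := w.count_le_length (a := a)
    by_cases h : a = c <;> simp [h, Ne.symm]; omega

theorem levenshtein_le_hammingDistL {u v : List α} (h : u.length = v.length) :
    levenshtein defaultCost u v ≤ hammingDistL u v := by
  induction u generalizing v with
  | nil => cases v with
    | nil => rfl
    | cons => simp at h
  | cons a u ih => cases v with
    | nil => simp at h
    | cons b v =>
      rw [hammingDistL_cons_cons, add_comm, ← defaultCost_substitute]
      exact (levenshtein_cons_cons_le _ a u b v).trans (by simpa using ih (by simpa using h))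

end Hamming

-- With truncated subtraction this also says, for `j ≤ i`, that the count is monotone.
theorem List.count_take_le_count_take_add {α : Type*} [BEq α] (a : α) (v : List α)
    (i j : ℕ) :
    (v.take j).count a ≤ (v.take i).count a + (j - i) := by
  rcases le_total j i with hji | hij
  · exact ((List.take_sublist_take_left hji).count_le a).trans (Nat.le_add_right _ _)
  · obtain ⟨d, rfl⟩ := Nat.exists_eq_add_of_le hij
    rw [List.take_add, List.count_append, Nat.add_sub_cancel_left]
    exact Nat.add_le_add_left (List.count_le_length.trans (List.length_take_le _ _)) _

theorem List.eq_replicate_of_length_destutter'_le_one {α : Type*} [DecidableEq α] {a : α}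
    {u : List α} (h : (u.destutter' (· ≠ ·) a).length ≤ 1) :
    u = List.replicate u.length a := by
  induction u with
  | nil => rfl
  | cons c u ih =>
    by_cases hac : a = c
    · subst hac
      rw [List.destutter'_cons_neg _ (not_not.2 rfl)] at h
      rw [List.length_cons, List.replicate_succ, ← ih h]
    · rw [List.destutter'_cons_pos _ hac, List.length_cons] at h
      have := List.length_pos_iff.2 (List.destutter'_ne_nil (l := u) (a := c) (R := (· ≠ ·)))
      omega

theorem List.exists_eq_replicate_append_replicate_of_length_destutter'_le_two {α : Type*}
    [DecidableEq α] {a : α} {u : List α} (h : (u.destutter' (· ≠ ·) a).length ≤ 2) :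
    ∃ (k m : ℕ) (b : α), u = List.replicate k a ++ List.replicate m b := by
  induction u with
  | nil => exact ⟨0, 0, a, rfl⟩
  | cons c u ih =>
    by_cases hac : a = c
    · subst hac
      rw [List.destutter'_cons_neg _ (not_not.2 rfl)] at h
      obtain ⟨k, m, b, rfl⟩ := ih h
      exact ⟨k + 1, m, b, rfl⟩
    · rw [List.destutter'_cons_pos _ hac, List.length_cons] at h
      refine ⟨0, u.length + 1, c, ?_⟩
      rw [List.replicate_succ, ← List.eq_replicate_of_length_destutter'_le_one (by omega)]
      rfl

section TwoRuns

variable {α : Type*} [DecidableEq α]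

theorem exists_cons_eq_replicate_append_replicate_of_numRuns_le_two {a : α} {u : List α}
    (h : numRuns (a :: u) ≤ 2) :
    ∃ (k m : ℕ) (b : α), a :: u = List.replicate k a ++ List.replicate m b := by
  obtain ⟨k, m, b, rfl⟩ :=
    List.exists_eq_replicate_append_replicate_of_length_destutter'_le_two h
  exact ⟨k + 1, m, b, rfl⟩

theorem hammingDistL_replicate_append_replicate (a b : α) (k m : ℕ) {v : List α}
    (hv : v.length = k + m) :
    hammingDistL (List.replicate k a ++ List.replicate m b) v =
      (k - (v.take k).count a) + (m - (v.drop k).count b) := by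
  have hk : (v.take k).length = k := by simp; omega
  have hm : (v.drop k).length = m := by simp; omega
  rw [hammingDistL_append_left, List.length_replicate, hammingDistL_replicate a hk,
    hammingDistL_replicate b hm]

theorem hammingDistL_le_levenshtein_replicate_append_replicate (a b : α) (k m : ℕ) {v : List α}
    (hv : v.length = k + m) :
    hammingDistL (List.replicate k a ++ List.replicate m b) v ≤
      levenshtein defaultCost (List.replicate k a ++ List.replicate m b) v := by
  obtain ⟨j, hj, hsplit⟩ :=
    exists_levenshtein_add_levenshtein_le_append defaultCost (.replicate k a) (.replicate m b) v
  have ha := max_sub_count_le_levenshtein_replicate a k (v.take j)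
  have hb := max_sub_count_le_levenshtein_replicate b m (v.drop j)
  have hajk := v.count_take_le_count_take_add a j k
  have hakj := v.count_take_le_count_take_add a k j
  have hbjk := v.count_take_le_count_take_add b j k
  have hbkj := v.count_take_le_count_take_add b k j
  have hbj := congrArg (List.count b) (v.take_append_drop j)
  have hbk := congrArg (List.count b) (v.take_append_drop k)
  have hak : (v.take k).count a ≤ k := List.count_le_length.trans (List.length_take_le _ _)
  have hbm : (v.drop k).count b ≤ m := List.count_le_length.trans (by simp; omega)
  rw [List.count_append] at hbj hbk
  simp only [List.length_take, List.length_drop] at ha hb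
  rw [hammingDistL_replicate_append_replicate a b k m hv]
  omega

theorem hammingDistL_le_levenshtein_of_numRuns_le_two {u v : List α}
    (hlen : u.length = v.length) (hu : numRuns u ≤ 2) :
    hammingDistL u v ≤ levenshtein defaultCost u v := by
  rcases u with _ | ⟨a, u⟩
  · exact Nat.zero_le _
  obtain ⟨k, m, b, hu⟩ := exists_cons_eq_replicate_append_replicate_of_numRuns_le_two hu
  rw [hu] at hlen ⊢
  exact hammingDistL_le_levenshtein_replicate_append_replicate a b k m (by simpa using hlen.symm)

end TwoRuns

/-- if `u` and `v` have the same length and one of them has at most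
two runs, then the Levenshtein distance equals the Hamming distance. -/
theorem lev_eq_hamming_of_two_runs {α : Type*} [DecidableEq α] (u v : List α)
    (hlen : u.length = v.length) (hruns : numRuns u ≤ 2 ∨ numRuns v ≤ 2) :
    levenshtein Levenshtein.defaultCost u v = hammingDistL u v := by
  refine le_antisymm (levenshtein_le_hammingDistL hlen) ?_
  rcases hruns with hu | hv
  · exact hammingDistL_le_levenshtein_of_numRuns_le_two hlen hu
  · rw [hammingDistL_comm, levenshtein_defaultCost_comm]
    exact hammingDistL_le_levenshtein_of_numRuns_le_two hlen.symm hv
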